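/- Let X be a proper geodesic metric space with basepoint o, and let H be a finitely generated group of isometries of X such that the orbit map H → X, h ↦ h·o, is a stable embedding. If there exists a Morse gauge N such that ΛH ⊆ ∂X_o^N, then every x ∈ ΛH is a Morse conical limit point of the orbit Ho. -/

import Mathlib

set_option autoImplicit false

universe u v

open Set Metric

/-- A map `γ : ℝ → X` is a (unit–speed) geodesic on the interval `[s, t]`. -/
def IsGeodesicOn {X : Type*} [MetricSpace X] (γ : ℝ → X) (s t : ℝ) : Prop :=
  ∀ u ∈ Set.Icc s t, ∀ v ∈ Set.Icc s t, dist (γ u) (γ v) = |u - v|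

/-- A geodesic ray defined on the domain `[a, ∞)`. -/
def IsGeodesicRay {X : Type*} [MetricSpace X] (a : ℝ) (α : ℝ → X) : Prop :=
  ∀ u ∈ Set.Ici a, ∀ v ∈ Set.Ici a, dist (α u) (α v) = |u - v|

/-- A bi-infinite geodesic line. -/
def IsGeodesicLine {X : Type*} [MetricSpace X] (γ : ℝ → X) : Prop :=
  ∀ u v : ℝ, dist (γ u) (γ v) = |u - v|

/-- `X` is a geodesic metric space: any two points are joined by a geodesic segment. -/
def IsGeodesicSpace (X : Type*) [MetricSpace X] : Prop :=
  ∀ x y : X, ∃ γ : ℝ → X, IsGeodesicOn γ 0 (dist x y) ∧ γ 0 = x ∧ γ (dist x y) = y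

/-- A `(K, C)`-quasi-geodesic defined on the interval `[s, t]`. -/
def IsQuasiGeodesicOn {X : Type*} [MetricSpace X] (K C : ℝ) (φ : ℝ → X) (s t : ℝ) : Prop :=
  ∀ u ∈ Set.Icc s t, ∀ v ∈ Set.Icc s t,
    (1 / K) * |u - v| - C ≤ dist (φ u) (φ v) ∧ dist (φ u) (φ v) ≤ K * |u - v| + C

/-- A Morse gauge: a function `N : [1,∞) × [0,∞) → [0,∞)`. -/
abbrev MorseGauge : Type :=
  {N : ℝ → ℝ → ℝ // ∀ K C : ℝ, 1 ≤ K → 0 ≤ C → 0 ≤ N K C}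

/-- A subset `S ⊆ X` (e.g. the image of a (quasi-)geodesic) is `N`-Morse if every
`(K, C)`-quasi-geodesic with endpoints on `S` stays in the `N (K, C)`-neighborhood of `S`. -/
def IsMorseSet {X : Type*} [MetricSpace X] (N : MorseGauge) (S : Set X) : Prop :=
  ∀ K C : ℝ, 1 ≤ K → 0 ≤ C → ∀ (φ : ℝ → X) (s t : ℝ), s ≤ t →
    IsQuasiGeodesicOn K C φ s t → φ s ∈ S → φ t ∈ S →
    ∀ u ∈ Set.Icc s t, ∃ p ∈ S, dist (φ u) p ≤ N.1 K C

/-- The constant `δ_N = max {4N(1, 2N(5,0)) + 2N(5,0), 8N(3,0)} + N(5,0)`. -/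
noncomputable def deltaGauge (N : MorseGauge) : ℝ :=
  max (4 * N.1 1 (2 * N.1 5 0) + 2 * N.1 5 0) (8 * N.1 3 0) + N.1 5 0

/-- Two rays `α, β` `K`-asymptotically fellow-travel: `α ∼_K β`. -/
def FellowTravel {X : Type*} [MetricSpace X] (K : ℝ) (α β : ℝ → X) : Prop :=
  ∃ T : ℝ, ∀ t ≥ T, dist (α t) (β t) ≤ K

/-- Two subsets of `X` are at finite Hausdorff distance from each other. -/
def FinHausdorff {X : Type*} [MetricSpace X] (S T : Set X) : Prop :=
  ∃ C : ℝ, (∀ s ∈ S, ∃ t ∈ T, dist s t ≤ C) ∧ (∀ t ∈ T, ∃ s ∈ S, dist s t ≤ C)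

/-- The closest point projection `π_S (x)` of `x` to a subset `S`. -/
noncomputable def nearestPoints {X : Type*} [MetricSpace X] (S : Set X) (x : X) : Set X :=
  {s ∈ S | dist x s = Metric.infDist x S}

/-- The Morse stratum `X_o^N`: points `x` joined to `o` by an `N`-Morse geodesic. -/
def InMorseStratum {X : Type*} [MetricSpace X] (o : X) (N : MorseGauge) (x : X) : Prop :=
  ∃ γ : ℝ → X, IsGeodesicOn γ 0 (dist o x) ∧ γ 0 = o ∧ γ (dist o x) = x ∧
    IsMorseSet N (γ '' Set.Icc 0 (dist o x))

/-- The space of `N`-Morse geodesic rays emanating from `o`, with the topology of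
pointwise (equivalently, since rays are `1`-Lipschitz, uniform-on-compact) convergence. -/
abbrev MorseRaysFrom {X : Type*} [MetricSpace X] (o : X) (N : MorseGauge) : Type _ :=
  {α : ℝ → X // IsGeodesicRay 0 α ∧ α 0 = o ∧ IsMorseSet N (α '' Set.Ici 0)}

/-- Two Morse rays from `o` are identified when they are at finite Hausdorff distance. -/
def AsympRel {X : Type*} [MetricSpace X] (o : X)
    (p q : Σ N : MorseGauge, MorseRaysFrom o N) : Prop :=
  FinHausdorff (p.2.1 '' Set.Ici 0) (q.2.1 '' Set.Ici 0)

/-- The Morse boundary `∂X_o`: the direct limit over all Morse gauges `N` of the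
boundaries `∂X_o^N` of the strata, realized as the quotient of the disjoint union of
the ray spaces; it carries the direct limit (quotient) topology. -/
abbrev MorseBoundary {X : Type*} [MetricSpace X] (o : X) : Type _ :=
  Quot (AsympRel o)

/-- The boundary point `α(∞) ∈ ∂X_o` determined by a Morse geodesic ray from `o`. -/
def boundaryPoint {X : Type*} [MetricSpace X] (o : X) (N : MorseGauge)
    (α : MorseRaysFrom o N) : MorseBoundary o :=
  Quot.mk _ ⟨N, α⟩

/-- Membership `x ∈ ∂X_o^N` for a point of the Morse boundary. -/
def InStratumBoundary {X : Type*} [MetricSpace X] (o : X) (N : MorseGauge)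
    (x : MorseBoundary o) : Prop :=
  ∃ α : MorseRaysFrom o N, boundaryPoint o N α = x

/-- A geodesic ray `α : [a,∞) → X` converges to (represents) the point `x ∈ ∂X_o`,
written `α(∞) = x`: it is at finite Hausdorff distance from a Morse ray from `o`
representing `x`. -/
def RayConvergesTo {X : Type*} [MetricSpace X] (o : X) (a : ℝ) (α : ℝ → X)
    (x : MorseBoundary o) : Prop :=
  ∃ (N : MorseGauge) (β : MorseRaysFrom o N), boundaryPoint o N β = x ∧
    FinHausdorff (α '' Set.Ici a) (β.1 '' Set.Ici 0)

/-- The limit set `ΛA ⊆ ∂X_o` of `A ⊆ X`: points `x` such that, for some Morse gauge `N`,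
there is a sequence in `A ∩ X_o^N` whose geodesics from `o` converge uniformly on compact
sets to a geodesic ray representing `x`. -/
def limitSet {X : Type*} [MetricSpace X] (o : X) (A : Set X) : Set (MorseBoundary o) :=
  {x | ∃ (N : MorseGauge) (p : ℕ → X) (γ : ℕ → ℝ → X) (α : ℝ → X),
      (∀ k, p k ∈ A ∧ InMorseStratum o N (p k)) ∧
      (∀ k, IsGeodesicOn (γ k) 0 (dist o (p k)) ∧ γ k 0 = o ∧ γ k (dist o (p k)) = p k) ∧
      IsGeodesicRay 0 α ∧ α 0 = o ∧
      (∀ R > (0:ℝ), ∀ ε > (0:ℝ), ∃ K : ℕ, ∀ k ≥ K, R ≤ dist o (p k) ∧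
        ∀ t ∈ Set.Icc (0:ℝ) R, dist (γ k t) (α t) ≤ ε) ∧
      RayConvergesTo o 0 α x}

/-- The `N`-Morse horoball based at `o` around the geodesic ray `α : [a,∞) → X`,
where `M` is the Morse gauge of `α` (used via the constant `δ_M`). -/
def morseHoroball {X : Type*} [MetricSpace X] (o : X) (N M : MorseGauge) (a : ℝ)
    (α : ℝ → X) : Set X :=
  {x | InMorseStratum o N x ∧ ∃ b ≥ a, ∃ β : ℝ → X,
    IsGeodesicRay b β ∧ β b = x ∧ FellowTravel (deltaGauge M) α β}

/-- The `N`-Morse funnel based at `o` around the geodesic ray `α : [a,∞) → X`. -/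
noncomputable def morseFunnel {X : Type*} [MetricSpace X] (o : X) (N : MorseGauge) (a : ℝ)
    (α : ℝ → X) : Set X :=
  {x | InMorseStratum o N x ∧
    Metric.infDist x (α '' Set.Ici a) ≤
      Metric.infDist (α a) (nearestPoints (α '' Set.Ici a) x)}

/-- `x ∈ ∂X_o` is a Morse conical limit point of `A ⊆ X`: there is `K > 0` such that the
`K`-neighborhood of every Morse geodesic ray representing `x` meets `A`. -/
def IsMorseConicalLimitPoint {X : Type*} [MetricSpace X] (o : X) (A : Set X)
    (x : MorseBoundary o) : Prop :=
  ∃ K > (0:ℝ), ∀ (a : ℝ) (α : ℝ → X), IsGeodesicRay a α →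
    (∃ M : MorseGauge, IsMorseSet M (α '' Set.Ici a)) → RayConvergesTo o a α x →
    ∃ y ∈ A, Metric.infDist y (α '' Set.Ici a) ≤ K

/-- `x ∈ ∂X_o` is a Morse horospherical limit point of `A ⊆ X`: for every Morse geodesic
ray `α` representing `x` (with Morse gauge `M`), some Morse horoball about `α` meets `A`. -/
def IsMorseHoroLimitPoint {X : Type*} [MetricSpace X] (o : X) (A : Set X)
    (x : MorseBoundary o) : Prop :=
  ∀ (a : ℝ) (α : ℝ → X) (M : MorseGauge), IsGeodesicRay a α →
    IsMorseSet M (α '' Set.Ici a) → RayConvergesTo o a α x →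
    ∃ N : MorseGauge, (morseHoroball o N M a α ∩ A).Nonempty

/-- `x ∈ ∂X_o` is a Morse funnelled limit point of `A ⊆ X`: for every Morse geodesic ray
`α` representing `x`, some Morse funnel about `α` meets `A`. -/
def IsMorseFunnelLimitPoint {X : Type*} [MetricSpace X] (o : X) (A : Set X)
    (x : MorseBoundary o) : Prop :=
  ∀ (a : ℝ) (α : ℝ → X), IsGeodesicRay a α →
    (∃ M : MorseGauge, IsMorseSet M (α '' Set.Ici a)) → RayConvergesTo o a α x →
    ∃ N : MorseGauge, (morseFunnel o N a α ∩ A).Nonempty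

/-- The weak convex hull `WCH(B)` of a set `B ⊆ ∂X_o` of boundary points: the union of all
bi-infinite geodesics of `X` both of whose endpoints at infinity lie in `B`. -/
def weakConvexHull {X : Type*} [MetricSpace X] (o : X) (B : Set (MorseBoundary o)) :
    Set X :=
  {y | ∃ γ : ℝ → X, IsGeodesicLine γ ∧
    (∃ x₁ ∈ B, RayConvergesTo o 0 γ x₁) ∧
    (∃ x₂ ∈ B, RayConvergesTo o 0 (fun t => γ (-t)) x₂) ∧
    ∃ t : ℝ, γ t = y}

/-- The action of `H` on `X` is by isometries. -/
def IsIsometricAction (H X : Type*) [Group H] [MulAction H X] [MetricSpace X] : Prop :=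
  ∀ (h : H) (x y : X), dist (h • x) (h • y) = dist x y

/-- The action of `H` on `X` is (metrically) proper. -/
def IsProperAction (H : Type*) {X : Type*} [Group H] [MulAction H X] [MetricSpace X]
    (o : X) : Prop :=
  ∀ R : ℝ, {h : H | dist (h • o) o ≤ R}.Finite

/-- The orbit `H·o` of the basepoint. -/
def orbitSet (H : Type*) {X : Type*} [Group H] [MulAction H X] (o : X) : Set X :=
  Set.range fun h : H => h • o

/-- The action of `H` on the subset `Y ⊆ X` is cobounded: `Y` lies in a bounded
neighborhood of some `H`-orbit in `Y`. -/
def IsCoboundedActionOn (H : Type*) {X : Type*} [Group H] [MulAction H X] [MetricSpace X]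
    (Y : Set X) : Prop :=
  Y = ∅ ∨ ∃ p ∈ Y, ∃ R : ℝ, ∀ y ∈ Y, ∃ h : H, dist y (h • p) ≤ R

/-- The word metric on `H` associated to a generating set `S`. -/
noncomputable def wordDist {H : Type*} [Group H] (S : Set H) (g h : H) : ℕ :=
  sInf {n : ℕ | ∃ w : List H, (∀ u ∈ w, u ∈ S ∨ u⁻¹ ∈ S) ∧ w.length = n ∧ w.prod = g⁻¹ * h}

/-- The orbit map `h ↦ h • o` is a stable embedding: it is a quasi-isometric embedding of
`H` (with a word metric coming from a finite generating set) into `X`, and there is a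
Morse gauge `N` such that any two points of the orbit are joined by an `N`-Morse
quasi-geodesic of `X`. -/
def OrbitMapStable (H : Type*) {X : Type*} [Group H] [MulAction H X] [MetricSpace X]
    (o : X) : Prop :=
  ∃ S : Finset H, Subgroup.closure (S : Set H) = ⊤ ∧
    (∃ lam : ℝ, 1 ≤ lam ∧ ∀ g h : H,
      (wordDist (S : Set H) g h : ℝ) / lam - lam ≤ dist (g • o) (h • o) ∧
      dist (g • o) (h • o) ≤ lam * (wordDist (S : Set H) g h : ℝ) + lam) ∧
    ∃ N : MorseGauge, ∀ g h : H, ∃ (K C s t : ℝ) (φ : ℝ → X),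
      1 ≤ K ∧ 0 ≤ C ∧ s ≤ t ∧ IsQuasiGeodesicOn K C φ s t ∧ φ s = g • o ∧ φ t = h • o ∧
      IsMorseSet N (φ '' Set.Icc s t)

/-- `H` acts boundary convex cocompactly on `X` (with respect to the basepoint `o`):
the action is proper, the limit set `ΛH` is nonempty and compact, and the action of `H`
on the weak convex hull of `ΛH` is cobounded. -/
def BoundaryConvexCocompact (H : Type*) {X : Type*} [Group H] [MulAction H X]
    [MetricSpace X] (o : X) : Prop :=
  IsProperAction H o ∧ (limitSet o (orbitSet H o)).Nonempty ∧
    IsCompact (limitSet o (orbitSet H o)) ∧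
    IsCoboundedActionOn H (weakConvexHull o (limitSet o (orbitSet H o)))

/-- `X` is `δ`-hyperbolic (four-point condition). -/
def IsGromovHyperbolic (X : Type*) [MetricSpace X] (δ : ℝ) : Prop :=
  ∀ x y z w : X, dist x y + dist z w ≤ max (dist x z + dist y w) (dist x w + dist y z) + 2 * δ

/-- The horoball `H(α)` about a geodesic ray `α : [a,∞) → X` in a `δ`-hyperbolic space:
the union of the images of all geodesic rays `β : [b,∞) → X` with `β ∼_{6δ} α` and
`b ≥ a`. -/
def horoball {X : Type*} [MetricSpace X] (δ a : ℝ) (α : ℝ → X) : Set X :=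
  {x | ∃ b ≥ a, ∃ β : ℝ → X, IsGeodesicRay b β ∧ FellowTravel (6 * δ) α β ∧
    ∃ t ≥ b, β t = x}

/-- The funnel `F(α)` about a geodesic ray `α : [a,∞) → X`:
`F(α) = {x : d(x, α) ≤ d(π_α(x), α(a))}`. -/
noncomputable def funnel {X : Type*} [MetricSpace X] (a : ℝ) (α : ℝ → X) : Set X :=
  {x | Metric.infDist x (α '' Set.Ici a) ≤
    Metric.infDist (α a) (nearestPoints (α '' Set.Ici a) x)}

/-! ### Auxiliary lemmas for the proof of Statement 18 -/

section Aux

variable {Y : Type*} [MetricSpace Y]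

lemma ray_dist {a : ℝ} {α : ℝ → Y} (hα : IsGeodesicRay a α)
    {u v : ℝ} (hu : a ≤ u) (huv : u ≤ v) : dist (α u) (α v) = v - u := by
  have h := hα u hu v (hu.trans huv)
  rwa [abs_sub_comm, abs_of_nonneg (by linarith)] at h

lemma geo_dist {γ : ℝ → Y} {s t : ℝ} (hγ : IsGeodesicOn γ s t)
    {u v : ℝ} (hu : u ∈ Set.Icc s t) (hv : v ∈ Set.Icc s t) (huv : u ≤ v) :
    dist (γ u) (γ v) = v - u := by
  have h := hγ u hu v hv
  rwa [abs_sub_comm, abs_of_nonneg (by linarith)] at h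

lemma finHausdorff_refl (S : Set Y) : FinHausdorff S S :=
  ⟨0, fun s hs => ⟨s, hs, by simp⟩, fun s hs => ⟨s, hs, by simp⟩⟩

lemma finHausdorff_symm {S T : Set Y} (h : FinHausdorff S T) : FinHausdorff T S := by
  obtain ⟨C, h1, h2⟩ := h
  refine ⟨C, fun t ht => ?_, fun s hs => ?_⟩
  · obtain ⟨s, hs, hd⟩ := h2 t ht
    exact ⟨s, hs, by rwa [dist_comm]⟩
  · obtain ⟨t, ht, hd⟩ := h1 s hs
    exact ⟨t, ht, by rwa [dist_comm]⟩

lemma finHausdorff_trans {S T U : Set Y} (h : FinHausdorff S T) (h' : FinHausdorff T U) :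
    FinHausdorff S U := by
  obtain ⟨C, h1, h2⟩ := h
  obtain ⟨C', h1', h2'⟩ := h'
  refine ⟨C + C', fun s hs => ?_, fun u hu => ?_⟩
  · obtain ⟨t, ht, hd⟩ := h1 s hs
    obtain ⟨u, hu, hd'⟩ := h1' t ht
    exact ⟨u, hu, (dist_triangle s t u).trans (by linarith)⟩
  · obtain ⟨t, ht, hd⟩ := h2' u hu
    obtain ⟨s, hs, hd'⟩ := h2 t ht
    exact ⟨s, hs, (dist_triangle s t u).trans (by linarith)⟩

lemma finHausdorff_of_boundaryPoint {o : Y} {N N' : MorseGauge}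
    (γ : MorseRaysFrom o N) (β : MorseRaysFrom o N')
    (h : boundaryPoint o N γ = boundaryPoint o N' β) :
    FinHausdorff (γ.1 '' Set.Ici 0) (β.1 '' Set.Ici 0) := by
  have h' : Relation.EqvGen (AsympRel o) ⟨N, γ⟩ ⟨N', β⟩ := Quot.eqvGen_exact h
  have key : ∀ p q : (Σ M : MorseGauge, MorseRaysFrom o M), Relation.EqvGen (AsympRel o) p q →
      FinHausdorff (p.2.1 '' Set.Ici 0) (q.2.1 '' Set.Ici 0) := by
    intro p q hpq
    induction hpq with
    | rel _ _ h => exact h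
    | refl _ => exact finHausdorff_refl _
    | symm _ _ _ ih => exact finHausdorff_symm ih
    | trans _ _ _ _ _ ih1 ih2 => exact finHausdorff_trans ih1 ih2
  exact key _ _ h'

section MiddleClose

variable {Y : Type*} [MetricSpace Y]

/-- Core lemma: if `γ` is an `N`-Morse geodesic ray and `α` is a geodesic ray, and we pick
almost-nearest points `α u₁, α u₂` on `α` for `γ s₁, γ s₂`, with the window `[u₁,u₂]` long
compared to the connector lengths, then the concatenated path through `α` is a
`(5,1)`-quasi-geodesic with endpoints on `γ`, so the middle of `α` is `N(5,1)`-close to `γ`. -/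
lemma middle_close (hgeo : IsGeodesicSpace Y) {N : MorseGauge}
    {γ : ℝ → Y} (hM : IsMorseSet N (γ '' Set.Ici 0))
    {a : ℝ} {α : ℝ → Y} (hα : IsGeodesicRay a α)
    {s₁ s₂ u₁ u₂ : ℝ} (hs₁ : 0 ≤ s₁) (hs₂ : 0 ≤ s₂) (hu₁ : a ≤ u₁) (hu₁₂ : u₁ ≤ u₂)
    (hl₁ : dist (γ s₁) (α u₁) ≤ Metric.infDist (γ s₁) (α '' Set.Ici a) + 1)
    (hl₂ : dist (γ s₂) (α u₂) ≤ Metric.infDist (γ s₂) (α '' Set.Ici a) + 1)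
    (hsp₁ : 3 * dist (γ s₁) (α u₁) ≤ u₂ - u₁)
    (hsp₂ : 3 * dist (γ s₂) (α u₂) ≤ u₂ - u₁) :
    ∀ z ∈ Set.Icc u₁ u₂, Metric.infDist (α z) (γ '' Set.Ici 0) ≤ N.1 5 1 := by
  intro z hz
  obtain ⟨c₁, hc₁, hc₁0, hc₁l⟩ := hgeo (γ s₁) (α u₁)
  obtain ⟨c₂, hc₂, hc₂0, hc₂l⟩ := hgeo (α u₂) (γ s₂)
  set l₁ : ℝ := dist (γ s₁) (α u₁) with hl₁def
  set l₂ : ℝ := dist (α u₂) (γ s₂) with hl₂def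
  set L : ℝ := u₂ - u₁ with hLdef
  have hu₂ : a ≤ u₂ := hu₁.trans hu₁₂
  have hL0 : 0 ≤ L := by linarith [hLdef]
  have hl₁0 : 0 ≤ l₁ := dist_nonneg
  have hl₂0 : 0 ≤ l₂ := dist_nonneg
  have hl₂' : dist (γ s₂) (α u₂) = l₂ := dist_comm _ _
  rw [hl₂'] at hl₂ hsp₂
  set T : ℝ := l₁ + L + l₂ with hTdef
  set ψ : ℝ → Y := fun t =>
    if t < l₁ then c₁ t else if t ≤ l₁ + L then α (u₁ + (t - l₁)) else c₂ (t - (l₁ + L))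
    with hψdef
  have E1 : ∀ t, 0 ≤ t → t ≤ l₁ → ψ t = c₁ t := by
    intro t ht0 htl
    simp only [hψdef]
    split_ifs with h1 h2
    · rfl
    · have ht : t = l₁ := le_antisymm htl (not_lt.1 h1)
      subst ht
      rw [hc₁l]
      congr 1; ring
    · exact absurd (by linarith : t ≤ l₁ + L) h2
  have E2 : ∀ t, l₁ ≤ t → t ≤ l₁ + L → ψ t = α (u₁ + (t - l₁)) := by
    intro t ht1 ht2
    simp only [hψdef]
    rw [if_neg (not_lt.2 ht1), if_pos ht2]
  have E3 : ∀ t, l₁ + L ≤ t → ψ t = c₂ (t - (l₁ + L)) := by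
    intro t ht
    simp only [hψdef]
    split_ifs with h1 h2
    · exact absurd h1 (by push_neg; linarith)
    · have ht' : t = l₁ + L := le_antisymm h2 ht
      subst ht'
      have h0 : l₁ + L - (l₁ + L) = (0:ℝ) := by ring
      rw [h0, hc₂0]
      congr 1
      rw [hLdef]; ring
    · rfl
  have hmemα : ∀ v : ℝ, a ≤ v → α v ∈ α '' Set.Ici a := fun v hv => ⟨v, hv, rfl⟩
  have hinf₁ : ∀ v : ℝ, a ≤ v → l₁ - 1 ≤ dist (γ s₁) (α v) := by
    intro v hv
    have := Metric.infDist_le_dist_of_mem (x := γ s₁) (hmemα v hv)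
    linarith
  have hinf₂ : ∀ v : ℝ, a ≤ v → l₂ - 1 ≤ dist (γ s₂) (α v) := by
    intro v hv
    have := Metric.infDist_le_dist_of_mem (x := γ s₂) (hmemα v hv)
    linarith
  have dc₁ : ∀ u, 0 ≤ u → u ≤ l₁ → dist (γ s₁) (c₁ u) = u := by
    intro u h0 h1
    rw [← hc₁0]
    have := geo_dist hc₁ ⟨le_refl _, hl₁0⟩ ⟨h0, h1⟩ h0
    simpa using this
  have dc₁' : ∀ u, 0 ≤ u → u ≤ l₁ → dist (c₁ u) (α u₁) = l₁ - u := by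
    intro u h0 h1
    rw [← hc₁l]
    exact geo_dist hc₁ ⟨h0, h1⟩ ⟨hl₁0, le_refl _⟩ h1
  have dc₂ : ∀ u, 0 ≤ u → u ≤ l₂ → dist (α u₂) (c₂ u) = u := by
    intro u h0 h1
    rw [← hc₂0]
    have := geo_dist hc₂ ⟨le_refl _, hl₂0⟩ ⟨h0, h1⟩ h0
    simpa using this
  have dc₂' : ∀ u, 0 ≤ u → u ≤ l₂ → dist (c₂ u) (γ s₂) = l₂ - u := by
    intro u h0 h1
    rw [← hc₂l]
    exact geo_dist hc₂ ⟨h0, h1⟩ ⟨hl₂0, le_refl _⟩ h1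
  have key : ∀ u v : ℝ, 0 ≤ u → u ≤ v → v ≤ T →
      ((1/5) * (v - u) - 1 ≤ dist (ψ u) (ψ v) ∧ dist (ψ u) (ψ v) ≤ v - u) := by
    intro u v hu0 huv hvT
    have hv0 : 0 ≤ v := hu0.trans huv
    have hvT' : v ≤ l₁ + L + l₂ := by rw [hTdef] at hvT; exact hvT
    rcases le_or_gt u l₁ with hu1 | hu1
    · rcases le_or_gt v l₁ with hv1 | hv1
      · -- case (1,1)
        rw [E1 u hu0 hu1, E1 v hv0 hv1, geo_dist hc₁ ⟨hu0, hu1⟩ ⟨hv0, hv1⟩ huv]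
        constructor <;> linarith
      · rcases le_or_gt v (l₁ + L) with hv2 | hv2
        · -- case (1,2)
          rw [E1 u hu0 hu1, E2 v hv1.le hv2]
          have hva : a ≤ u₁ + (v - l₁) := by linarith
          have dA1 := dc₁' u hu0 hu1
          have dA0 := dc₁ u hu0 hu1
          have dB1 : dist (α u₁) (α (u₁ + (v - l₁))) = v - l₁ := by
            rw [ray_dist hα hu₁ (by linarith)]; ring
          have hup : dist (c₁ u) (α (u₁ + (v - l₁))) ≤ v - u := by
            have h := dist_triangle (c₁ u) (α u₁) (α (u₁ + (v - l₁)))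
            rw [dA1, dB1] at h; linarith
          have hb1 : (l₁ - 1) - u ≤ dist (c₁ u) (α (u₁ + (v - l₁))) := by
            have h1 := hinf₁ (u₁ + (v - l₁)) hva
            have h2 := dist_triangle (γ s₁) (c₁ u) (α (u₁ + (v - l₁)))
            rw [dA0] at h2; linarith
          have hb2 : (v - l₁) - (l₁ - u) ≤ dist (c₁ u) (α (u₁ + (v - l₁))) := by
            have h2 := dist_triangle (α u₁) (c₁ u) (α (u₁ + (v - l₁)))
            rw [dist_comm (α u₁) (c₁ u), dA1, dB1] at h2; linarith
          refine ⟨?_, hup⟩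
          rcases le_or_gt (v - l₁) (2 * (l₁ - u)) with hcase | hcase
          · linarith
          · linarith
        · -- case (1,3)
          rw [E1 u hu0 hu1, E3 v hv2.le]
          have hρ'0 : (0:ℝ) ≤ v - (l₁ + L) := by linarith
          have hρ'l : v - (l₁ + L) ≤ l₂ := by linarith
          have dA1 := dc₁' u hu0 hu1
          have dB := dc₂ (v - (l₁ + L)) hρ'0 hρ'l
          have dmid : dist (α u₁) (α u₂) = L := by
            rw [ray_dist hα hu₁ hu₁₂]
          have hlow : L - (l₁ - u) - (v - (l₁ + L)) ≤ dist (c₁ u) (c₂ (v - (l₁ + L))) := by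
            have h2 := dist_triangle4 (α u₁) (c₁ u) (c₂ (v - (l₁ + L))) (α u₂)
            rw [dmid, dist_comm (α u₁) (c₁ u), dA1, dist_comm (c₂ (v - (l₁ + L))) (α u₂),
              dB] at h2
            linarith
          have hup : dist (c₁ u) (c₂ (v - (l₁ + L))) ≤ v - u := by
            have h2 := dist_triangle4 (c₁ u) (α u₁) (α u₂) (c₂ (v - (l₁ + L)))
            rw [dA1, dmid, dB] at h2
            linarith
          refine ⟨?_, hup⟩
          have h3 : l₁ ≤ L / 3 := by linarith
          have h4 : l₂ ≤ L / 3 := by linarith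
          linarith
    · rcases le_or_gt v (l₁ + L) with hv2 | hv2
      · -- case (2,2)
        rw [E2 u hu1.le (huv.trans hv2), E2 v (hu1.le.trans huv) hv2,
          ray_dist hα (by linarith) (by linarith)]
        constructor <;> linarith
      · rcases le_or_gt u (l₁ + L) with hu2 | hu2
        · -- case (2,3)
          rw [E2 u hu1.le hu2, E3 v hv2.le]
          have hρ'0 : (0:ℝ) ≤ v - (l₁ + L) := by linarith
          have hρ'l : v - (l₁ + L) ≤ l₂ := by linarith
          have hva : a ≤ u₁ + (u - l₁) := by linarith
          have hA2 : dist (α (u₁ + (u - l₁))) (α u₂) = (l₁ + L) - u := by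
            rw [ray_dist hα hva (by linarith [hLdef])]
            rw [hLdef]; ring
          have dB := dc₂ (v - (l₁ + L)) hρ'0 hρ'l
          have dB2 := dc₂' (v - (l₁ + L)) hρ'0 hρ'l
          have hup : dist (α (u₁ + (u - l₁))) (c₂ (v - (l₁ + L))) ≤ v - u := by
            have h := dist_triangle (α (u₁ + (u - l₁))) (α u₂) (c₂ (v - (l₁ + L)))
            rw [hA2, dB] at h; linarith
          have hb1 : (v - (l₁ + L)) - 1 ≤ dist (α (u₁ + (u - l₁))) (c₂ (v - (l₁ + L))) := by
            have h1 := hinf₂ (u₁ + (u - l₁)) hva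
            have h2 := dist_triangle (γ s₂) (c₂ (v - (l₁ + L))) (α (u₁ + (u - l₁)))
            rw [dist_comm (γ s₂) (c₂ (v - (l₁ + L))), dB2,
              dist_comm (c₂ (v - (l₁ + L))) (α (u₁ + (u - l₁)))] at h2
            linarith
          have hb2 : ((l₁ + L) - u) - (v - (l₁ + L)) ≤
              dist (α (u₁ + (u - l₁))) (c₂ (v - (l₁ + L))) := by
            have h2 := dist_triangle (α (u₁ + (u - l₁))) (c₂ (v - (l₁ + L))) (α u₂)
            rw [hA2, dist_comm (c₂ (v - (l₁ + L))) (α u₂), dB] at h2; linarith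
          refine ⟨?_, hup⟩
          rcases le_or_gt ((l₁ + L) - u) (2 * (v - (l₁ + L))) with hcase | hcase
          · linarith
          · linarith
        · -- case (3,3)
          rw [E3 u hu2.le, E3 v (hu2.le.trans huv)]
          have h1 : u - (l₁ + L) ∈ Set.Icc (0:ℝ) l₂ := ⟨by linarith, by linarith⟩
          have h2 : v - (l₁ + L) ∈ Set.Icc (0:ℝ) l₂ := ⟨by linarith, by linarith⟩
          rw [geo_dist hc₂ h1 h2 (by linarith)]
          constructor <;> linarith
  have hqg : IsQuasiGeodesicOn 5 1 ψ 0 T := by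
    intro u hu v hv
    rcases le_total u v with huv | huv
    · obtain ⟨h1, h2⟩ := key u v hu.1 huv hv.2
      have habs : |u - v| = v - u := by rw [abs_sub_comm, abs_of_nonneg (by linarith)]
      rw [habs]
      exact ⟨h1, by nlinarith⟩
    · obtain ⟨h1, h2⟩ := key v u hv.1 huv hu.2
      have habs : |u - v| = u - v := abs_of_nonneg (by linarith)
      rw [habs, dist_comm]
      exact ⟨h1, by nlinarith⟩
  have hψ0 : ψ 0 ∈ γ '' Set.Ici 0 := by
    rw [E1 0 le_rfl hl₁0, hc₁0]; exact ⟨s₁, hs₁, rfl⟩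
  have hψT : ψ T ∈ γ '' Set.Ici 0 := by
    rw [E3 T (by rw [hTdef]; linarith)]
    have hT' : T - (l₁ + L) = l₂ := by rw [hTdef]; ring
    rw [hT', hc₂l]; exact ⟨s₂, hs₂, rfl⟩
  have hT0 : (0:ℝ) ≤ T := by rw [hTdef]; linarith
  have hmorse := hM 5 1 (by norm_num) zero_le_one ψ 0 T hT0 hqg hψ0 hψT
  have hz1 := hz.1
  have hz2 := hz.2
  have hzmem : l₁ + (z - u₁) ∈ Set.Icc (0:ℝ) T := by
    constructor
    · linarith
    · rw [hTdef, hLdef]; linarith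
  obtain ⟨p, hp, hdp⟩ := hmorse (l₁ + (z - u₁)) hzmem
  have hψz : ψ (l₁ + (z - u₁)) = α z := by
    rw [E2 (l₁ + (z - u₁)) (by linarith) (by rw [hLdef]; linarith)]
    congr 1; ring
  rw [hψz] at hdp
  exact (Metric.infDist_le_dist_of_mem hp).trans hdp

end MiddleClose

section Attraction

variable {Y : Type*} [MetricSpace Y]

/-- If `α` is a geodesic ray at finite Hausdorff distance from an `N`-Morse geodesic ray `γ`,
then from some parameter on, `α` is within `N(5,1)` of `γ`. -/
lemma eventually_close (hgeo : IsGeodesicSpace Y) {N : MorseGauge}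
    {γ : ℝ → Y} (hγ : IsGeodesicRay 0 γ) (hM : IsMorseSet N (γ '' Set.Ici 0))
    {a : ℝ} {α : ℝ → Y} (hα : IsGeodesicRay a α)
    {C₀ : ℝ} (hC₀ : 0 ≤ C₀)
    (h2 : ∀ q ∈ γ '' Set.Ici 0, ∃ p ∈ α '' Set.Ici a, dist q p ≤ C₀) :
    ∃ u₁ ≥ a, ∀ z ≥ u₁, Metric.infDist (α z) (γ '' Set.Ici 0) ≤ N.1 5 1 := by
  have hne : (α '' Set.Ici a).Nonempty := ⟨α a, a, Set.self_mem_Ici, rfl⟩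
  have hinfC : ∀ s : ℝ, 0 ≤ s → Metric.infDist (γ s) (α '' Set.Ici a) ≤ C₀ := by
    intro s hs
    obtain ⟨p, hp, hd⟩ := h2 (γ s) ⟨s, hs, rfl⟩
    exact (Metric.infDist_le_dist_of_mem hp).trans hd
  -- choose an almost-nearest point for γ 0
  obtain ⟨q₁, hq₁mem, hq₁⟩ :=
    (Metric.infDist_lt_iff hne).mp (lt_add_one (Metric.infDist (γ 0) (α '' Set.Ici a)))
  obtain ⟨u₁, hu₁a, rfl⟩ := hq₁mem
  refine ⟨u₁, hu₁a, fun z hz => ?_⟩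
  -- choose s₂ far out
  set W : ℝ := max z (u₁ + 3 * (C₀ + 1)) with hW
  set s₂ : ℝ := max 0 (W - a + (C₀ + 1) + dist (γ 0) (α a)) with hs₂def
  have hs₂0 : (0:ℝ) ≤ s₂ := le_max_left _ _
  have hs₂big : W - a + (C₀ + 1) + dist (γ 0) (α a) ≤ s₂ := le_max_right _ _
  obtain ⟨q₂, hq₂mem, hq₂⟩ :=
    (Metric.infDist_lt_iff hne).mp (lt_add_one (Metric.infDist (γ s₂) (α '' Set.Ici a)))
  obtain ⟨u₂, hu₂a, rfl⟩ := hq₂mem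
  have he₂ : Metric.infDist (γ s₂) (α '' Set.Ici a) ≤ C₀ := hinfC s₂ hs₂0
  have he₁ : Metric.infDist (γ 0) (α '' Set.Ici a) ≤ C₀ := hinfC 0 le_rfl
  have hd₁ : dist (γ 0) (α u₁) ≤ C₀ + 1 := by linarith
  have hd₂ : dist (γ s₂) (α u₂) ≤ C₀ + 1 := by linarith
  -- u₂ is large
  have hγ0s₂ : dist (γ 0) (γ s₂) = s₂ := by
    have := ray_dist hγ le_rfl hs₂0; simpa using this
  have hu₂W : W ≤ u₂ := by
    have tA := dist_triangle (γ 0) (α u₂) (γ s₂)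
    have tB := dist_triangle (γ 0) (α a) (α u₂)
    have t3 : dist (α a) (α u₂) = u₂ - a := ray_dist hα le_rfl hu₂a
    rw [hγ0s₂, dist_comm (α u₂) (γ s₂)] at tA
    rw [t3] at tB
    linarith
  have hzW : z ≤ W := le_max_left _ _
  have hu₁W : u₁ + 3 * (C₀ + 1) ≤ W := le_max_right _ _
  have hu₁₂ : u₁ ≤ u₂ := by linarith
  have key := middle_close hgeo hM hα (le_refl (0:ℝ)) hs₂0 hu₁a hu₁₂
    (by linarith) (by linarith)
    (by linarith) (by linarith)
  exact key z ⟨hz, by linarith⟩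

/-- Sweep lemma: if every point of `α` past `u₁` is `δ₁`-close to the ray `γ`, then every
point of `γ` past some parameter `T` is `(3δ₁+4)`-close to `α`. -/
lemma ray_close_of_mid {γ : ℝ → Y} (hγ : IsGeodesicRay 0 γ)
    {a : ℝ} {α : ℝ → Y} (hα : IsGeodesicRay a α) {u₁ : ℝ} (hu₁ : a ≤ u₁)
    {δ₁ : ℝ} (hδ₁ : 0 ≤ δ₁)
    (hcl : ∀ z ≥ u₁, Metric.infDist (α z) (γ '' Set.Ici 0) ≤ δ₁) :
    ∃ T : ℝ, ∀ s ≥ T, 0 ≤ s → Metric.infDist (γ s) (α '' Set.Ici a) ≤ 3 * δ₁ + 4 := by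
  classical
  have hγne : (γ '' Set.Ici 0).Nonempty := ⟨γ 0, 0, Set.self_mem_Ici, rfl⟩
  have Hch : ∀ n : ℕ, ∃ t : ℝ, 0 ≤ t ∧ dist (α (u₁ + n)) (γ t) < δ₁ + 1 := by
    intro n
    have h1 : Metric.infDist (α (u₁ + n)) (γ '' Set.Ici 0) < δ₁ + 1 :=
      lt_of_le_of_lt (hcl (u₁ + n) (by have hc : (0:ℝ) ≤ n := n.cast_nonneg; linarith))
        (lt_add_one δ₁)
    obtain ⟨p, ⟨t, ht, rfl⟩, hp⟩ := (Metric.infDist_lt_iff hγne).mp h1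
    exact ⟨t, ht, hp⟩
  choose σ hσ0 hσd using Hch
  have hjump : ∀ n : ℕ, |σ (n+1) - σ n| ≤ 2 * δ₁ + 3 := by
    intro n
    have h1 : dist (γ (σ (n+1))) (γ (σ n)) = |σ (n+1) - σ n| := by
      rw [hγ (σ (n+1)) (hσ0 (n+1)) (σ n) (hσ0 n)]
    have h2 : dist (α (u₁ + (n+1:ℕ))) (α (u₁ + n)) = 1 := by
      rw [dist_comm, ray_dist hα (by have hc : (0:ℝ) ≤ n := n.cast_nonneg; linarith)
        (by push_cast; linarith)]
      push_cast; ring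
    have h3 := dist_triangle4 (γ (σ (n+1))) (α (u₁ + (n+1:ℕ))) (α (u₁ + n)) (γ (σ n))
    rw [h2] at h3
    have h4 := hσd (n+1)
    have h5 := hσd n
    rw [dist_comm] at h4
    rw [← h1]
    linarith
  set B : ℝ := dist (α a) (γ 0) + δ₁ + 1 with hB
  have hgrow : ∀ n : ℕ, (n:ℝ) - B ≤ σ n := by
    intro n
    have h1 : dist (γ 0) (γ (σ n)) = σ n := by
      have := ray_dist hγ le_rfl (hσ0 n); simpa using this
    have h2 : dist (α a) (α (u₁ + n)) = u₁ + n - a :=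
      ray_dist hα le_rfl (by have hc : (0:ℝ) ≤ n := n.cast_nonneg; linarith)
    have t1 := dist_triangle (γ 0) (γ (σ n)) (α (u₁ + n))
    have t2 := dist_triangle (α a) (γ 0) (α (u₁ + n))
    have h4 := hσd n
    rw [h1, dist_comm (γ (σ n)) (α (u₁ + n))] at t1
    rw [h2] at t2
    linarith
  refine ⟨σ 0, fun s hs hs0 => ?_⟩
  have hex : ∃ n : ℕ, s < σ n := by
    obtain ⟨n, hn⟩ := exists_nat_gt (s + B)
    exact ⟨n, by have := hgrow n; linarith⟩
  set n₀ := Nat.find hex with hn₀def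
  have hn₀ : s < σ n₀ := Nat.find_spec hex
  have hne0 : n₀ ≠ 0 := by
    intro h
    rw [h] at hn₀
    linarith
  set n := n₀ - 1 with hndef
  have hnlt : n < n₀ := Nat.pred_lt hne0
  have hsn : ¬ s < σ n := Nat.find_min hex hnlt
  have h1 : σ n ≤ s := not_lt.1 hsn
  have hsucc : n + 1 = n₀ := Nat.succ_pred_eq_of_ne_zero hne0
  have h2 : s < σ (n + 1) := by rw [hsucc]; exact hn₀
  have h3 : σ (n+1) - σ n ≤ 2 * δ₁ + 3 := (le_abs_self _).trans (hjump n)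
  have hds : dist (γ s) (γ (σ n)) = s - σ n := by
    rw [dist_comm, ray_dist hγ (hσ0 n) h1]
  have hfinal : dist (γ s) (α (u₁ + n)) ≤ 3 * δ₁ + 4 := by
    have ht := dist_triangle (γ s) (γ (σ n)) (α (u₁ + n))
    have h5 := hσd n
    rw [dist_comm (γ (σ n)) (α (u₁ + n))] at ht
    rw [hds] at ht
    linarith
  have hmem : α (u₁ + n) ∈ α '' Set.Ici a :=
    ⟨u₁ + n, by have hc : (0:ℝ) ≤ n := n.cast_nonneg; simp only [Set.mem_Ici]; linarith, rfl⟩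
  exact (Metric.infDist_le_dist_of_mem hmem).trans hfinal

end Attraction

section Word

variable {H : Type*} [Group H]

lemma wordDist_le {S : Set H} {g h : H} {w : List H}
    (hw : ∀ u ∈ w, u ∈ S ∨ u⁻¹ ∈ S) (hprod : w.prod = g⁻¹ * h) :
    wordDist S g h ≤ w.length :=
  Nat.sInf_le ⟨w, hw, rfl, hprod⟩

lemma wordSet_nonempty {S : Set H} (hS : Subgroup.closure S = ⊤) (g h : H) :
    {n : ℕ | ∃ w : List H,
      (∀ u ∈ w, u ∈ S ∨ u⁻¹ ∈ S) ∧ w.length = n ∧ w.prod = g⁻¹ * h}.Nonempty := by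
  have hx : g⁻¹ * h ∈ Subgroup.closure S := by rw [hS]; exact Subgroup.mem_top _
  have hx' : g⁻¹ * h ∈ Submonoid.closure (S ∪ S⁻¹) := by
    rw [← Subgroup.closure_toSubmonoid]; exact hx
  obtain ⟨w, hw, hprod⟩ := Submonoid.exists_list_of_mem_closure hx'
  refine ⟨w.length, w, fun u hu => ?_, rfl, hprod⟩
  rcases hw u hu with h1 | h1
  · exact Or.inl h1
  · exact Or.inr (Set.mem_inv.mp h1)

lemma exists_min_word {S : Set H} (hS : Subgroup.closure S = ⊤) (g h : H) :
    ∃ w : List H, (∀ u ∈ w, u ∈ S ∨ u⁻¹ ∈ S) ∧ w.length = wordDist S g h ∧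
      w.prod = g⁻¹ * h :=
  Nat.sInf_mem (wordSet_nonempty hS g h)

lemma prefix_wordDist {S : Set H} (hS : Subgroup.closure S = ⊤) {h : H} {w : List H}
    (hw : ∀ u ∈ w, u ∈ S ∨ u⁻¹ ∈ S) (hlen : w.length = wordDist S 1 h)
    (hprod : w.prod = (1:H)⁻¹ * h) {i j : ℕ} (hij : i ≤ j) (hj : j ≤ w.length) :
    wordDist S (w.take i).prod (w.take j).prod = j - i := by
  set k := j - i with hk
  have hjk : j = i + k := by omega
  have hsplit : w.take j = w.take i ++ (w.drop i).take k := by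
    rw [hjk]; exact List.take_add
  have hmid : ((w.take i).prod)⁻¹ * (w.take j).prod = ((w.drop i).take k).prod := by
    rw [hsplit, List.prod_append]; group
  have hmidlen : ((w.drop i).take k).length = k := by
    rw [List.length_take, List.length_drop]; omega
  have hup : wordDist S (w.take i).prod (w.take j).prod ≤ k := by
    have := wordDist_le (S := S) (g := (w.take i).prod) (h := (w.take j).prod)
      (w := (w.drop i).take k)
      (fun u hu => hw u (List.drop_subset i w (List.take_subset k (w.drop i) hu)))
      hmid.symm
    rwa [hmidlen] at this
  have hlow : k ≤ wordDist S (w.take i).prod (w.take j).prod := by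
    by_contra hcon
    push_neg at hcon
    obtain ⟨w', hw', hw'len, hw'prod⟩ :=
      exists_min_word hS (w.take i).prod (w.take j).prod
    have hbig : (w.take i ++ w' ++ w.drop j).prod = (1:H)⁻¹ * h := by
      have hdropprod : (w.drop j).prod = ((w.take j).prod)⁻¹ * w.prod := by
        have := List.take_append_drop j w
        have hp : (w.take j).prod * (w.drop j).prod = w.prod := by
          rw [← List.prod_append, this]
        rw [← hp]; group
      rw [List.prod_append, List.prod_append, hw'prod, hdropprod, hprod]
      group
    have hbigw : ∀ u ∈ w.take i ++ w' ++ w.drop j, u ∈ S ∨ u⁻¹ ∈ S := by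
      intro u hu
      rcases List.mem_append.1 hu with hu1 | hu2
      · rcases List.mem_append.1 hu1 with hu3 | hu4
        · exact hw u (List.take_subset i w hu3)
        · exact hw' u hu4
      · exact hw u (List.drop_subset j w hu2)
    have hblen : (w.take i ++ w' ++ w.drop j).length < w.length := by
      rw [List.length_append, List.length_append, List.length_take, List.length_drop,
        hw'len]
      omega
    have := wordDist_le (S := S) (g := (1:H)) (h := h) hbigw hbig
    omega
  omega

end Word

section OrbitPath

variable {H : Type*} {Y : Type*} [Group H] [MetricSpace Y] [MulAction H Y]

/-- Every point of an `N₀`-Morse geodesic from `o` to an orbit point `hk • o` is uniformly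
close to an orbit point, where the uniform constant only depends on `N₀` and the
quasi-isometry constant of the orbit map. -/
lemma orbit_near_geodesic {o : Y} {S : Set H} (hS : Subgroup.closure S = ⊤)
    {lam : ℝ} (hlam : 1 ≤ lam)
    (hQI : ∀ g h : H, (wordDist S g h : ℝ) / lam - lam ≤ dist (g • o) (h • o) ∧
      dist (g • o) (h • o) ≤ lam * (wordDist S g h : ℝ) + lam)
    {N₀ : MorseGauge} (hk : H) {σ : ℝ → Y} {d : ℝ} (hd : 0 ≤ d)
    (hσ : IsGeodesicOn σ 0 d) (hσ0 : σ 0 = o) (hσd : σ d = hk • o)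
    (hMorse : IsMorseSet N₀ (σ '' Set.Icc 0 d)) :
    ∀ t ∈ Set.Icc 0 d, ∃ y ∈ orbitSet H o,
      dist (σ t) y ≤ 3 * N₀.1 lam (2*lam+1) + 2*lam := by
  classical
  intro t ht
  have hlam0 : (0:ℝ) < lam := lt_of_lt_of_le one_pos hlam
  set E₀ : ℝ := N₀.1 lam (2*lam+1) with hE₀def
  have hE₀ : 0 ≤ E₀ := N₀.2 lam (2*lam+1) hlam (by linarith)
  obtain ⟨w, hw, hwlen, hwprod⟩ := exists_min_word hS 1 hk
  set n : ℕ := w.length with hn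
  set g : ℕ → H := fun i => (w.take i).prod with hg
  set y : ℕ → Y := fun i => g i • o with hy
  have hyorb : ∀ i : ℕ, y i ∈ orbitSet H o := fun i => ⟨g i, rfl⟩
  have hy0 : y 0 = o := by
    show g 0 • o = o
    have : g 0 = 1 := by show (w.take 0).prod = 1; simp
    rw [this, one_smul]
  have hyn : y n = hk • o := by
    show g n • o = hk • o
    have : g n = hk := by
      show (w.take n).prod = hk
      rw [hn, List.take_length, hwprod, inv_one, one_mul]
    rw [this]
  have hwd : ∀ i j : ℕ, i ≤ j → j ≤ n → wordDist S (g i) (g j) = j - i := by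
    intro i j hij hj
    exact prefix_wordDist hS hw hwlen hwprod hij (by rw [← hn]; exact hj)
  have hyd : ∀ i j : ℕ, i ≤ j → j ≤ n →
      ((j:ℝ) - i)/lam - lam ≤ dist (y i) (y j) ∧
      dist (y i) (y j) ≤ lam * ((j:ℝ) - i) + lam := by
    intro i j hij hj
    have h1 := hQI (g i) (g j)
    have h2 : ((wordDist S (g i) (g j) : ℕ) : ℝ) = (j:ℝ) - i := by
      rw [hwd i j hij hj, Nat.cast_sub hij]
    rw [h2] at h1
    exact h1
  set φ : ℝ → Y := fun s => y (min n ⌊s⌋₊) with hφ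
  have hφnat : ∀ i : ℕ, i ≤ n → φ (i:ℝ) = y i := by
    intro i hi
    show y (min n ⌊(i:ℝ)⌋₊) = y i
    rw [Nat.floor_natCast, min_eq_right hi]
  have hfl : ∀ u : ℝ, 0 ≤ u → u ≤ (n:ℝ) →
      ((⌊u⌋₊:ℝ) ≤ u ∧ u < ⌊u⌋₊ + 1 ∧ ⌊u⌋₊ ≤ n) := by
    intro u hu0 hun
    refine ⟨Nat.floor_le hu0, Nat.lt_floor_add_one u, ?_⟩
    have := Nat.floor_le_floor hun
    rwa [Nat.floor_natCast] at this
  have hqg : IsQuasiGeodesicOn lam (2*lam+1) φ 0 (n:ℝ) := by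
    have hil : 1/lam ≤ 1 := by rw [div_le_one hlam0]; exact hlam
    have hil0 : 0 ≤ 1/lam := by positivity
    have main : ∀ u v : ℝ, 0 ≤ u → u ≤ (n:ℝ) → 0 ≤ v → v ≤ (n:ℝ) → ⌊u⌋₊ ≤ ⌊v⌋₊ →
        ((1/lam) * |u - v| - (2*lam+1) ≤ dist (φ u) (φ v) ∧
         dist (φ u) (φ v) ≤ lam * |u - v| + (2*lam+1)) := by
      intro u v hu0 hun hv0 hvn hf
      obtain ⟨hu1, hu2, hu3⟩ := hfl u hu0 hun
      obtain ⟨hv1, hv2, hv3⟩ := hfl v hv0 hvn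
      have hφu : φ u = y ⌊u⌋₊ := by
        show y (min n ⌊u⌋₊) = y ⌊u⌋₊; rw [min_eq_right hu3]
      have hφv : φ v = y ⌊v⌋₊ := by
        show y (min n ⌊v⌋₊) = y ⌊v⌋₊; rw [min_eq_right hv3]
      rw [hφu, hφv]
      obtain ⟨hb1, hb2⟩ := hyd ⌊u⌋₊ ⌊v⌋₊ hf hv3
      have hfc : ((⌊u⌋₊:ℝ)) ≤ ((⌊v⌋₊:ℝ)) := Nat.cast_le.2 hf
      set J : ℝ := ((⌊v⌋₊:ℝ)) - ((⌊u⌋₊:ℝ)) with hJ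
      have hJ0 : 0 ≤ J := by linarith
      have habs1 : |u - v| ≤ J + 1 := by
        rw [abs_le]; constructor <;> linarith
      have habs2 : J - 1 ≤ |u - v| := by
        have h5 : v - u ≤ |u - v| := by
          rw [abs_sub_comm]; exact le_abs_self _
        linarith
      have hdiv : ((⌊v⌋₊:ℝ) - (⌊u⌋₊:ℝ))/lam = (1/lam) * J := by
        rw [hJ]; ring
      rw [hdiv] at hb1
      constructor
      · have hm : (1/lam) * |u - v| ≤ (1/lam) * (J + 1) :=
          mul_le_mul_of_nonneg_left habs1 hil0
        have hm2 : (1/lam) * (J + 1) = (1/lam) * J + 1/lam := by ring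
        linarith
      · have hm : lam * J ≤ lam * (|u - v| + 1) :=
          mul_le_mul_of_nonneg_left (by linarith) (by linarith)
        have hm2 : lam * (|u - v| + 1) = lam * |u - v| + lam := by ring
        linarith
    intro u hu v hv
    rcases le_total ⌊u⌋₊ ⌊v⌋₊ with hf | hf
    · exact main u v hu.1 hu.2 hv.1 hv.2 hf
    · have h := main v u hv.1 hv.2 hu.1 hu.2 hf
      rw [dist_comm (φ v) (φ u), abs_sub_comm v u] at h
      exact h
  have hmem0 : φ 0 ∈ σ '' Set.Icc 0 d := by
    have h0 : φ ((0:ℕ):ℝ) = y 0 := hφnat 0 (Nat.zero_le n)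
    rw [Nat.cast_zero] at h0
    rw [h0, hy0, ← hσ0]
    exact ⟨0, ⟨le_rfl, hd⟩, rfl⟩
  have hmemn : φ (n:ℝ) ∈ σ '' Set.Icc 0 d := by
    rw [hφnat n le_rfl, hyn, ← hσd]
    exact ⟨d, ⟨hd, le_rfl⟩, rfl⟩
  have hmorse := hMorse lam (2*lam+1) hlam (by linarith) φ 0 (n:ℝ) n.cast_nonneg
    hqg hmem0 hmemn
  have hnear : ∀ i : ℕ, ∃ τ, τ ∈ Set.Icc 0 d ∧ dist (y (min n i)) (σ τ) ≤ E₀ := by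
    intro i
    have hmem : ((min n i : ℕ):ℝ) ∈ Set.Icc (0:ℝ) (n:ℝ) :=
      ⟨(min n i).cast_nonneg, Nat.cast_le.2 (min_le_left n i)⟩
    obtain ⟨p, ⟨τ, hτ, rfl⟩, hdp⟩ := hmorse ((min n i : ℕ):ℝ) hmem
    rw [hφnat _ (min_le_left n i)] at hdp
    exact ⟨τ, hτ, hdp⟩
  choose τ hτmem hτd using hnear
  have hτE : ∀ i : ℕ, i ≤ n → dist (y i) (σ (τ i)) ≤ E₀ := by
    intro i hi
    have := hτd i
    rwa [min_eq_right hi] at this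
  have hjump : ∀ i : ℕ, i + 1 ≤ n → |τ (i+1) - τ i| ≤ 2*E₀ + 2*lam := by
    intro i hi1
    have ht1 := hτE (i+1) hi1
    have ht2 := hτE i (by omega)
    have hyd1 : dist (y i) (y (i+1)) ≤ 2*lam := by
      have h := (hyd i (i+1) (by omega) hi1).2
      have hc : ((i+1:ℕ):ℝ) - (i:ℕ) = 1 := by push_cast; ring
      rw [hc] at h; linarith
    have habs : dist (σ (τ (i+1))) (σ (τ i)) = |τ (i+1) - τ i| :=
      hσ _ (hτmem (i+1)) _ (hτmem i)
    have h4 := dist_triangle4 (σ (τ (i+1))) (y (i+1)) (y i) (σ (τ i))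
    rw [habs, dist_comm (σ (τ (i+1))) (y (i+1)), dist_comm (y (i+1)) (y i)] at h4
    linarith
  -- distance from σ t to σ (τ i):
  have hdt : ∀ i : ℕ, dist (σ t) (σ (τ i)) = |t - τ i| := fun i => hσ t ht (τ i) (hτmem i)
  have hchain : ∀ i : ℕ, i ≤ n → dist (σ t) (y i) ≤ |t - τ i| + E₀ := by
    intro i hi
    have h1 := dist_triangle (σ t) (σ (τ i)) (y i)
    rw [hdt i, dist_comm (σ (τ i)) (y i)] at h1
    have := hτE i hi
    linarith
  set A : Finset ℕ := (Finset.range (n+1)).filter (fun i => τ i ≤ t) with hA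
  by_cases hAne : A.Nonempty
  · set i := A.max' hAne with hidef
    have hiA : i ∈ A := A.max'_mem hAne
    rw [hA, Finset.mem_filter, Finset.mem_range] at hiA
    have hin : i ≤ n := by omega
    have hτi : τ i ≤ t := hiA.2
    rcases eq_or_lt_of_le hin with hieq | hilt
    · -- i = n : top case
      have hend : dist (y n) (σ (τ n)) ≤ E₀ := hτE n le_rfl
      have hτn : d - τ n ≤ E₀ := by
        have hday : dist (σ d) (σ (τ n)) = |d - τ n| := hσ d ⟨hd, le_rfl⟩ (τ n) (hτmem n)
        rw [hσd, ← hyn] at hday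
        have h5 : |d - τ n| = d - τ n := abs_of_nonneg (by linarith [(hτmem n).2])
        rw [h5] at hday
        rw [← hday]
        exact hend
      refine ⟨y i, hyorb i, ?_⟩
      have h6 := hchain i hin
      have h7 : |t - τ i| ≤ E₀ := by
        rw [abs_of_nonneg (by linarith)]
        have : t ≤ d := ht.2
        rw [hieq]
        linarith
      linarith
    · -- i < n
      have hnotA : (i+1) ∉ A := by
        intro hc
        have := A.le_max' (i+1) hc
        rw [← hidef] at this
        omega
      have hτi1 : t < τ (i+1) := by
        by_contra hc
        push_neg at hc
        exact hnotA (by rw [hA, Finset.mem_filter, Finset.mem_range]; exact ⟨by omega, hc⟩)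
      have hj := hjump i hilt
      have hj' : τ (i+1) - τ i ≤ 2*E₀ + 2*lam := (le_abs_self _).trans hj
      refine ⟨y i, hyorb i, ?_⟩
      have h6 := hchain i hin
      have h7 : |t - τ i| ≤ 2*E₀ + 2*lam := by
        rw [abs_of_nonneg (by linarith)]
        linarith
      linarith
  · -- A empty: bottom case
    have h0A : (0:ℕ) ∉ A := fun hc => hAne ⟨0, hc⟩
    have hτ0 : t < τ 0 := by
      by_contra hc
      push_neg at hc
      exact h0A (by rw [hA, Finset.mem_filter, Finset.mem_range]; exact ⟨by omega, hc⟩)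
    have hE0' : dist (y 0) (σ (τ 0)) ≤ E₀ := hτE 0 (Nat.zero_le n)
    have hτ0E : τ 0 ≤ E₀ := by
      have hday : dist (σ 0) (σ (τ 0)) = |0 - τ 0| := hσ 0 ⟨le_rfl, hd⟩ (τ 0) (hτmem 0)
      rw [hσ0, ← hy0] at hday
      have h5 : |(0:ℝ) - τ 0| = τ 0 := by
        rw [abs_sub_comm, sub_zero, abs_of_nonneg (hτmem 0).1]
      rw [h5] at hday
      rw [← hday]
      exact hE0'
    refine ⟨y 0, hyorb 0, ?_⟩
    have h6 := hchain 0 (Nat.zero_le n)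
    have h7 : |t - τ 0| ≤ E₀ := by
      rw [abs_sub_comm, abs_of_nonneg (by linarith)]
      have := ht.1
      linarith
    linarith

end OrbitPath

/-- Let `H` be a finitely generated group of isometries of the proper
geodesic space `X` whose orbit map `h ↦ h • o` is a stable embedding. If `ΛH ⊆ ∂X_o^N`
for some Morse gauge `N`, then every `x ∈ ΛH` is a Morse conical limit point of `H·o`. -/
theorem stable_implies_conical (H : Type u) [Group H] (X : Type v) [MetricSpace X]
    [ProperSpace X] [MulAction H X] (hgeo : IsGeodesicSpace X)
    (hiso : IsIsometricAction H X) (o : X) (hstable : OrbitMapStable H o)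
    (N : MorseGauge) (hstr : ∀ x ∈ limitSet o (orbitSet H o), InStratumBoundary o N x) :
    ∀ x ∈ limitSet o (orbitSet H o), IsMorseConicalLimitPoint o (orbitSet H o) x := by
  intro x hx
  obtain ⟨γh, hγx⟩ := hstr x hx
  obtain ⟨N₀, p, γk, β, hpAll, hγkAll, hβray, hβ0, hconv, hβx⟩ := hx
  obtain ⟨S, hScl, ⟨lam, hlam, hQI⟩, -⟩ := hstable
  -- finite Hausdorff distance between β and the fixed N-Morse ray γ
  obtain ⟨N₃, β₃, hβ₃x, hFHβ⟩ := hβx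
  have hββγ : FinHausdorff (β '' Set.Ici 0) (γh.1 '' Set.Ici 0) :=
    finHausdorff_trans hFHβ (finHausdorff_of_boundaryPoint β₃ γh (hβ₃x.trans hγx.symm))
  obtain ⟨Cb', hCb1, -⟩ := hββγ
  set Cb : ℝ := max Cb' 0 with hCbdef
  have hCb0 : (0:ℝ) ≤ Cb := le_max_right _ _
  have hCb1' : ∀ s ∈ β '' Set.Ici 0, ∃ q ∈ γh.1 '' Set.Ici 0, dist s q ≤ Cb := by
    intro s hs
    obtain ⟨q, hq, hd⟩ := hCb1 s hs
    exact ⟨q, hq, hd.trans (le_max_left _ _)⟩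
  -- constants
  set δ₁ : ℝ := N.1 5 1 with hδ₁def
  have hδ₁ : 0 ≤ δ₁ := N.2 5 1 (by norm_num) zero_le_one
  set E₀ : ℝ := N₀.1 lam (2*lam+1) with hE₀def
  have hE₀ : 0 ≤ E₀ := N₀.2 lam (2*lam+1) hlam (by linarith)
  set M₀ : ℝ := N₀.1 1 0 with hM₀def
  have hM₀ : 0 ≤ M₀ := N₀.2 1 0 le_rfl le_rfl
  set D : ℝ := (3*E₀ + 2*lam) + M₀ + 1 + Cb with hDdef
  have hD0 : 0 ≤ D := by linarith
  refine ⟨D + 3*δ₁ + 5, by linarith, ?_⟩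
  intro a α hαray _hαM hαx
  -- finite Hausdorff distance between α and γ
  obtain ⟨N₄, β₄, hβ₄x, hFHα⟩ := hαx
  have hαγ : FinHausdorff (α '' Set.Ici a) (γh.1 '' Set.Ici 0) :=
    finHausdorff_trans hFHα (finHausdorff_of_boundaryPoint β₄ γh (hβ₄x.trans hγx.symm))
  obtain ⟨C₀', hC1, hC2⟩ := hαγ
  set C₀ : ℝ := max C₀' 0 with hC₀def
  have hC₀0 : (0:ℝ) ≤ C₀ := le_max_right _ _
  have h2' : ∀ q ∈ γh.1 '' Set.Ici 0, ∃ pp ∈ α '' Set.Ici a, dist q pp ≤ C₀ := by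
    intro q hq
    obtain ⟨pp, hpp, hd⟩ := hC2 q hq
    exact ⟨pp, hpp, by rw [dist_comm]; exact hd.trans (le_max_left _ _)⟩
  -- α is eventually N(5,1)-close to γ, hence γ is eventually (3δ₁+4)-close to α
  obtain ⟨u₁, hu₁a, hmid⟩ := eventually_close hgeo γh.2.1 γh.2.2.2 hαray hC₀0 h2'
  obtain ⟨T, hT⟩ := ray_close_of_mid γh.2.1 hαray hu₁a hδ₁ hmid
  -- choose a far-out orbit point near γ
  obtain ⟨m, hm⟩ := exists_nat_gt (max 1 (max T 0 + Cb + 1))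
  have hm1 : (1:ℝ) ≤ m := le_of_lt (lt_of_le_of_lt (le_max_left _ _) hm)
  have hmT : max T 0 + Cb + 1 ≤ (m:ℝ) := le_of_lt (lt_of_le_of_lt (le_max_right _ _) hm)
  have hm0 : (0:ℝ) < m := by linarith
  obtain ⟨K₁, hK₁⟩ := hconv (m:ℝ) hm0 1 one_pos
  obtain ⟨hdm, hclm⟩ := hK₁ K₁ le_rfl
  obtain ⟨hpOrb, hpStr⟩ := hpAll K₁
  obtain ⟨σk, hσk, hσk0, hσkd, hσkM⟩ := hpStr
  obtain ⟨hγkG, hγk0, hγkd⟩ := hγkAll K₁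
  set dk : ℝ := dist o (p K₁) with hdk
  have hdk0 : 0 ≤ dk := dist_nonneg
  have hmdk : (m:ℝ) ≤ dk := hdm
  have hqg1 : IsQuasiGeodesicOn 1 0 (γk K₁) 0 dk := by
    intro u hu v hv
    rw [hγkG u hu v hv]
    constructor
    · simp
    · simp
  have hmorse1 := hσkM 1 0 le_rfl le_rfl (γk K₁) 0 dk hdk0 hqg1
    (by rw [hγk0, ← hσk0]; exact ⟨0, ⟨le_rfl, hdk0⟩, rfl⟩)
    (by rw [hγkd, ← hσkd]; exact ⟨dk, ⟨hdk0, le_rfl⟩, rfl⟩)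
  obtain ⟨pt, ⟨t₁, ht₁, rfl⟩, hptd⟩ := hmorse1 (m:ℝ) ⟨m.cast_nonneg, hmdk⟩
  obtain ⟨hh, hhpk⟩ := hpOrb
  have hσkd' : σk dk = hh • o := by rw [hσkd]; exact hhpk.symm
  have horb := orbit_near_geodesic hScl hlam hQI hh hdk0 hσk hσk0 hσkd' hσkM t₁ ht₁
  obtain ⟨yy, hyyorb, hyyd⟩ := horb
  -- β m is Cb-close to a point γ s with s large
  have hβmem : β (m:ℝ) ∈ β '' Set.Ici 0 := ⟨(m:ℝ), Set.mem_Ici.2 (by linarith), rfl⟩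
  obtain ⟨q, hqmem, hqd⟩ := hCb1' (β (m:ℝ)) hβmem
  obtain ⟨s, hs0, rfl⟩ := hqmem
  have hs0' : (0:ℝ) ≤ s := hs0
  have hsval : dist o (γh.1 s) = s := by
    have h := ray_dist γh.2.1 le_rfl hs0'
    rw [γh.2.2.1] at h
    simpa using h
  have hβm : dist o (β (m:ℝ)) = (m:ℝ) := by
    have h := ray_dist hβray le_rfl (by linarith : (0:ℝ) ≤ (m:ℝ))
    rw [hβ0] at h
    simpa using h
  have hsR : max T 0 ≤ s := by
    have htr := dist_triangle o (γh.1 s) (β (m:ℝ))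
    rw [hsval, dist_comm (γh.1 s) (β (m:ℝ))] at htr
    -- dist o (β m) ≤ s + dist (β m) (γ s)
    have htr2 := dist_triangle o (β (m:ℝ)) (γh.1 s)
    rw [hβm, hsval] at htr2
    linarith
  -- chain of distances
  have hstep1 : dist yy (γk K₁ (m:ℝ)) ≤ (3*E₀ + 2*lam) + M₀ := by
    have h1 := dist_triangle yy (σk t₁) (γk K₁ (m:ℝ))
    rw [dist_comm yy (σk t₁)] at h1
    have h2 : dist (σk t₁) (γk K₁ (m:ℝ)) = dist (γk K₁ (m:ℝ)) (σk t₁) := dist_comm _ _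
    rw [h2] at h1
    linarith
  have hβcl : dist (γk K₁ (m:ℝ)) (β (m:ℝ)) ≤ 1 :=
    hclm (m:ℝ) ⟨by linarith, le_rfl⟩
  have hchain : dist yy (γh.1 s) ≤ D := by
    have h4 := dist_triangle4 yy (γk K₁ (m:ℝ)) (β (m:ℝ)) (γh.1 s)
    rw [hDdef]
    linarith
  refine ⟨yy, hyyorb, ?_⟩
  have hTs := hT s (le_trans (le_max_left T 0) hsR) (le_trans (le_max_right T 0) hsR)
  have hinf : Metric.infDist yy (α '' Set.Ici a) ≤
      Metric.infDist (γh.1 s) (α '' Set.Ici a) + dist yy (γh.1 s) :=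
    Metric.infDist_le_infDist_add_dist
  linarith
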